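/- Let d ≥ 2 and let 𝔗 be an accessible closed Lie subalgebra of gl(d,ℝ). Then there exists K > 0 such that for all lines u, v ∈ ℝP^{d−1} there is a continuous map ℜ : [0,1] → 𝔗 with ‖ℜ(t)‖ ≤ K for all t ∈ [0,1] such that the solution Φ : [0,1] → GL(d,ℝ) of the integral equation Φ(t) = Id + ∫_0^t ℜ(s)Φ(s) ds satisfies: Φ(1) maps the line u onto the line v. -/

import Mathlib

open MeasureTheory Filter Topology
open scoped Matrix.Norms.L2Operator ENNReal

/-- Square real matrices of size `d`, endowed (via the scoped instances above) with the
operator norm induced by the Euclidean norm on `ℝ^d`. -/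
abbrev Mat (d : ℕ) := Matrix (Fin d) (Fin d) ℝ

noncomputable instance {d : ℕ} : MeasurableSpace (Mat d) := borel (Mat d)
instance {d : ℕ} : BorelSpace (Mat d) := ⟨rfl⟩

theorem Matrix.isHermitian_transpose_mul_self {m n α : Type*} [Fintype m] [CommSemiring α]
    [StarRing α] [TrivialStar α] (A : Matrix m n α) : (Matrix.transpose A * A).IsHermitian := by
  simpa [Matrix.conjTranspose_eq_transpose_of_trivial] using Matrix.isHermitian_conjTranspose_mul_self A

/-- The `k`-th singular value (`0`-indexed, in **decreasing** order, so `sval M 0 = σ_1(M)`)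
of a `d × d` real matrix: the square root of the `k`-th largest eigenvalue of `Mᴴ * M`
(junk value `0` for `k ≥ d`). -/
noncomputable def sval {d : ℕ} (M : Mat d) (k : ℕ) : ℝ :=
  if h : k < d then
    Real.sqrt ((Matrix.isHermitian_transpose_mul_self M).eigenvalues
      (Tuple.sort (Matrix.isHermitian_transpose_mul_self M).eigenvalues (Fin.rev ⟨k, h⟩)))
  else 0

/-- `log⁺ r = max (log r) 0`. -/
noncomputable def logPlus (r : ℝ) : ℝ := max (Real.log r) 0

/-- `φ` is a continuous flow on `X`. -/
structure IsFlow {X : Type*} [TopologicalSpace X] (φ : ℝ → X → X) : Prop where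
  cont : Continuous fun q : ℝ × X => φ q.1 q.2
  map_zero : ∀ x, φ 0 x = x
  map_add : ∀ s t x, φ (s + t) x = φ s (φ t x)

/-- The flow `φ` preserves the measure `μ`. -/
def FlowInvariant {X : Type*} [MeasurableSpace X] (φ : ℝ → X → X) (μ : Measure X) : Prop :=
  ∀ t : ℝ, MeasurePreserving (φ t) μ μ

/-- The flow `φ` is ergodic with respect to `μ`: every measurable set invariant under all
time-`t` maps has measure `0` or `1`. -/
def FlowErgodic {X : Type*} [MeasurableSpace X] (φ : ℝ → X → X) (μ : Measure X) : Prop :=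
  FlowInvariant φ μ ∧
    ∀ s : Set X, MeasurableSet s → (∀ t : ℝ, φ t ⁻¹' s = s) → μ s = 0 ∨ μ s = 1

/-- `A : X → gl(d,ℝ)` belongs to `𝒢_IC`: it is measurable with `∫ ‖A‖ dμ < ∞`. -/
def LDSIntegrable {X : Type*} [MeasurableSpace X] {d : ℕ} (μ : Measure X)
    (A : X → Mat d) : Prop :=
  Measurable A ∧ Integrable (fun x => ‖A x‖) μ

/-- `Φ` is, on the orbit of `x`, the fundamental matrix solution of the linear variational
equation generated by `A` along the flow `φ`:
`Φ x t = Id + ∫_0^t A(φ^s x) Φ x s ds` for all `t`, with `t ↦ Φ x t` continuous. -/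
def IsLinSol {X : Type*} {d : ℕ} (φ : ℝ → X → X) (A : X → Mat d) (Φ : X → ℝ → Mat d)
    (x : X) : Prop :=
  Continuous (Φ x) ∧
  (∀ t : ℝ, IntervalIntegrable (fun s => A (φ s x) * Φ x s) MeasureTheory.volume 0 t) ∧
  ∀ t : ℝ, Φ x t = 1 + ∫ s in (0 : ℝ)..t, A (φ s x) * Φ x s

/-- `‖A - B‖_p` for generators, with values in `[0,∞]`. -/
noncomputable def DeltaFlow {X : Type*} [MeasurableSpace X] {d : ℕ} (μ : Measure X)
    (p : ℝ≥0∞) (A B : X → Mat d) : ℝ≥0∞ :=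
  eLpNorm (fun x => A x - B x) p μ

/-- The `L^p` infinitesimal generator metric `d_p(A,B) = ‖A-B‖_p/(1+‖A-B‖_p)`, equal to `1`
when `‖A-B‖_p = ∞`. -/
noncomputable def dLpFlow {X : Type*} [MeasurableSpace X] {d : ℕ} (μ : Measure X) (p : ℝ≥0∞)
    (A B : X → Mat d) : ℝ :=
  if DeltaFlow μ p A B = ⊤ then 1
  else (DeltaFlow μ p A B).toReal / (1 + (DeltaFlow μ p A B).toReal)

/-- `𝔗` is a closed Lie subalgebra of `gl(d,ℝ)`. -/
structure IsClosedLieSubalgebra {d : ℕ} (𝔗 : Set (Mat d)) : Prop where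
  zero_mem : (0 : Mat d) ∈ 𝔗
  add_mem : ∀ ⦃a b : Mat d⦄, a ∈ 𝔗 → b ∈ 𝔗 → a + b ∈ 𝔗
  smul_mem : ∀ (c : ℝ) ⦃a : Mat d⦄, a ∈ 𝔗 → c • a ∈ 𝔗
  lie_mem : ∀ ⦃a b : Mat d⦄, a ∈ 𝔗 → b ∈ 𝔗 → a * b - b * a ∈ 𝔗
  closed : IsClosed 𝔗

/-- The subgroup of `GL(d,ℝ)` generated by the exponentials of elements of `𝔗` (it is the
closure under multiplication of `{exp M : M ∈ 𝔗}`, which is already closed under inversion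
since `exp(M)⁻¹ = exp(-M)`). -/
def expGen {d : ℕ} (𝔗 : Set (Mat d)) : Set (Mat d) :=
  (Submonoid.closure ((fun M : Mat d => NormedSpace.exp M) '' 𝔗) : Submonoid (Mat d))

/-- `𝔗` is accessible: the subgroup of `GL(d,ℝ)` generated by the exponentials of its elements
acts transitively on the projective space `ℝP^{d-1}`. -/
def AccessibleAlg {d : ℕ} (𝔗 : Set (Mat d)) : Prop :=
  ∀ u v : Fin d → ℝ, u ≠ 0 → v ≠ 0 → ∃ R ∈ expGen 𝔗,
    (Submodule.span ℝ {u}).map (Matrix.mulVecLin R) = Submodule.span ℝ {v}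

/-- `𝔗` is saddle-conservative: for any nonzero direction `e` and `δ > 0`, the subgroup
generated by the exponentials of `𝔗` contains an element of determinant `1` mapping `e`
to `(1+δ)e`. -/
def SaddleConservativeAlg {d : ℕ} (𝔗 : Set (Mat d)) : Prop :=
  ∀ e : Fin d → ℝ, e ≠ 0 → ∀ δ : ℝ, 0 < δ →
    ∃ A ∈ expGen 𝔗, A.det = 1 ∧ A.mulVec e = (1 + δ) • e

/-- The function `t ↦ (1/t) log σ_k(Φ x t)` (with `k` 0-indexed) whose limit as `t → ∞`,
when it exists, is the `(k+1)`-th Lyapunov exponent at `x`. -/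
noncomputable def lyapFlow {X : Type*} {d : ℕ} (Φ : X → ℝ → Mat d) (k : ℕ) (x : X)
    (t : ℝ) : ℝ :=
  t⁻¹ * Real.log (sval (Φ x t) k)

namespace Stmt9
variable {d : ℕ}
noncomputable section

/-- Reachability of a group element `g` by a solution of a linear ODE with generator valued
in `𝔗`, bounded by `K`, supported in `[0,1]`. -/
def Reach (𝔗 : Set (Mat d)) (K : ℝ) (g : Mat d) : Prop :=
  ∃ R Φ : ℝ → Mat d,
    Continuous R ∧ (∀ t, R t ∈ 𝔗) ∧ (∀ t, ‖R t‖ ≤ K) ∧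
    (∀ t : ℝ, t ≤ 0 ∨ 1 ≤ t → R t = 0) ∧
    (∀ t, HasDerivAt Φ (R t * Φ t) t) ∧
    (∀ t : ℝ, t ≤ 0 → Φ t = 1) ∧ (∀ t : ℝ, 1 ≤ t → Φ t = g) ∧ (∀ t, IsUnit (Φ t))

theorem Reach.mono {𝔗 : Set (Mat d)} {K K' : ℝ} {g : Mat d} (h : K ≤ K')
    (hg : Reach 𝔗 K g) : Reach 𝔗 K' g := by
  obtain ⟨R, Φ, h1, h2, h3, h4, h5, h6, h7, h8⟩ := hg
  exact ⟨R, Φ, h1, h2, fun t => (h3 t).trans h, h4, h5, h6, h7, h8⟩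

theorem reach_one {𝔗 : Set (Mat d)} (h0 : (0 : Mat d) ∈ 𝔗) {K : ℝ} (hK : 0 ≤ K) :
    Reach 𝔗 K (1 : Mat d) := by
  refine ⟨fun _ => 0, fun _ => 1, continuous_const, fun _ => h0,
    fun t => by simpa using hK, fun _ _ => rfl, fun t => ?_, fun _ _ => rfl, fun _ _ => rfl,
    fun _ => isUnit_one⟩
  simpa using hasDerivAt_const t (1 : Mat d)

/-- The bump `h` used for time reparametrization. -/
def bump (t : ℝ) : ℝ := max (t - t ^ 2) 0

theorem bump_continuous : Continuous bump := by
  unfold bump; fun_prop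

theorem bump_nonneg (t : ℝ) : 0 ≤ bump t := le_max_right _ _

theorem bump_le (t : ℝ) : bump t ≤ 4⁻¹ := by
  unfold bump
  have h : t - t ^ 2 ≤ 4⁻¹ := by nlinarith [sq_nonneg (t - 2⁻¹)]
  exact max_le h (by norm_num)

theorem bump_eq_zero {t : ℝ} (h : t ≤ 0 ∨ 1 ≤ t) : bump t = 0 := by
  unfold bump
  rcases h with h | h
  · exact max_eq_right (by nlinarith)
  · exact max_eq_right (by nlinarith)

/-- cumulative bump -/
def cbump (t : ℝ) : ℝ := ∫ s in (0:ℝ)..t, bump s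

theorem cbump_deriv (t : ℝ) : HasDerivAt cbump (bump t) t :=
  (bump_continuous.integral_hasStrictDerivAt 0 t).hasDerivAt

theorem cbump_nonpos_eq (t : ℝ) (ht : t ≤ 0) : cbump t = 0 := by
  unfold cbump
  rw [intervalIntegral.integral_congr (g := fun _ => (0:ℝ)) ?_, intervalIntegral.integral_zero]
  intro s hs
  rw [Set.uIcc_of_ge ht] at hs
  exact bump_eq_zero (Or.inl hs.2)

theorem cbump_one : cbump 1 = 6⁻¹ := by
  unfold cbump
  rw [intervalIntegral.integral_congr (g := fun s => s - s ^ 2) ?_]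
  · open intervalIntegral in
    rw [integral_sub intervalIntegrable_id (intervalIntegrable_pow 2), integral_id, integral_pow]
    norm_num
  · intro s hs
    rw [Set.uIcc_of_le (by norm_num : (0:ℝ) ≤ 1)] at hs
    exact max_eq_left (by nlinarith [hs.1, hs.2])

theorem cbump_ge_one_eq (t : ℝ) (ht : 1 ≤ t) : cbump t = 6⁻¹ := by
  have h1 : cbump t = cbump 1 + ∫ s in (1:ℝ)..t, bump s := by
    unfold cbump
    rw [intervalIntegral.integral_add_adjacent_intervals
      (bump_continuous.intervalIntegrable _ _) (bump_continuous.intervalIntegrable _ _)]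
  have h2 : (∫ s in (1:ℝ)..t, bump s) = 0 := by
    rw [intervalIntegral.integral_congr (g := fun _ => (0:ℝ)) ?_, intervalIntegral.integral_zero]
    intro s hs
    rw [Set.uIcc_of_le ht] at hs
    exact bump_eq_zero (Or.inr hs.1)
  rw [h1, h2, cbump_one, add_zero]

theorem reach_exp {𝔗 : Set (Mat d)} (hsmul : ∀ (c : ℝ) ⦃a : Mat d⦄, a ∈ 𝔗 → c • a ∈ 𝔗)
    {M : Mat d} (hM : M ∈ 𝔗) : Reach 𝔗 (2 * ‖M‖) (NormedSpace.exp M) := by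
  set M6 : Mat d := (6:ℝ) • M with hM6
  refine ⟨fun t => bump t • M6, fun t => NormedSpace.exp (cbump t • M6),
    (bump_continuous.smul continuous_const), fun t => hsmul _ (hsmul _ hM),
    fun t => ?_, fun t ht => by simp only [bump_eq_zero ht, zero_smul],
    fun t => ?_, fun t ht => by simp only [cbump_nonpos_eq t ht, zero_smul, NormedSpace.exp_zero],
    fun t ht => ?_, fun t => Matrix.isUnit_exp _⟩
  · rw [norm_smul, hM6, norm_smul]
    have h1 := bump_le t
    have h2 := bump_nonneg t
    have h3 : ‖(6:ℝ)‖ = 6 := by norm_num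
    rw [Real.norm_eq_abs, abs_of_nonneg h2, h3]
    nlinarith [norm_nonneg M, bump_le t]
  · have hc : HasDerivAt (fun u : ℝ => NormedSpace.exp (u • M6))
        (M6 * NormedSpace.exp (cbump t • M6)) (cbump t) :=
      hasDerivAt_exp_smul_const' M6 (cbump t)
    have := HasDerivAt.scomp t hc (cbump_deriv t)
    simpa [smul_mul_assoc, Function.comp_def] using this
  · simp only [cbump_ge_one_eq t ht, hM6, smul_smul]
    norm_num


theorem Reach.mul {𝔗 : Set (Mat d)}
    (hadd : ∀ ⦃a b : Mat d⦄, a ∈ 𝔗 → b ∈ 𝔗 → a + b ∈ 𝔗)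
    (hsmul : ∀ (c : ℝ) ⦃a : Mat d⦄, a ∈ 𝔗 → c • a ∈ 𝔗)
    {K1 K2 : ℝ} {g1 g2 : Mat d} (H1 : Reach 𝔗 K1 g1) (H2 : Reach 𝔗 K2 g2) :
    Reach 𝔗 (2 * max K1 K2) (g2 * g1) := by
  obtain ⟨R1, Φ1, c1, m1, b1, z1, D1, i1, f1, u1⟩ := H1
  obtain ⟨R2, Φ2, c2, m2, b2, z2, D2, i2, f2, u2⟩ := H2
  have hK1 : 0 ≤ K1 := le_trans (norm_nonneg _) (b1 0)
  have hK2 : 0 ≤ K2 := le_trans (norm_nonneg _) (b2 0)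
  refine ⟨fun t => (2:ℝ) • R1 (2*t) + (2:ℝ) • R2 (2*t - 1),
    fun t => Φ2 (2*t - 1) * Φ1 (2*t), ?_, ?_, ?_, ?_, ?_, ?_, ?_, ?_⟩
  · fun_prop
  · intro t; exact hadd (hsmul _ (m1 _)) (hsmul _ (m2 _))
  · intro t
    beta_reduce
    rcases le_total t (1/2) with ht | ht
    · have hz : R2 (2*t - 1) = 0 := z2 _ (Or.inl (by linarith))
      rw [hz, smul_zero, add_zero, norm_smul]
      have := b1 (2*t)
      rw [Real.norm_eq_abs, abs_of_nonneg (by norm_num : (0:ℝ) ≤ 2)]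
      have hle : K1 ≤ max K1 K2 := le_max_left _ _
      nlinarith
    · have hz : R1 (2*t) = 0 := z1 _ (Or.inr (by linarith))
      rw [hz, smul_zero, zero_add, norm_smul]
      have := b2 (2*t - 1)
      rw [Real.norm_eq_abs, abs_of_nonneg (by norm_num : (0:ℝ) ≤ 2)]
      have hle : K2 ≤ max K1 K2 := le_max_right _ _
      nlinarith
  · intro t ht
    beta_reduce
    rcases ht with ht | ht
    · rw [z1 _ (Or.inl (by linarith)), z2 _ (Or.inl (by linarith))]; simp
    · rw [z1 _ (Or.inr (by linarith)), z2 _ (Or.inr (by linarith))]; simp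
  · intro t
    have hA : HasDerivAt (fun t : ℝ => Φ1 (2*t)) ((2:ℝ) • (R1 (2*t) * Φ1 (2*t))) t := by
      have hin : HasDerivAt (fun t : ℝ => 2*t) 2 t := by
        simpa using (hasDerivAt_id t).const_mul (2:ℝ)
      exact HasDerivAt.scomp t (D1 (2*t)) hin
    have hB : HasDerivAt (fun t : ℝ => Φ2 (2*t - 1)) ((2:ℝ) • (R2 (2*t - 1) * Φ2 (2*t - 1))) t := by
      have hin : HasDerivAt (fun t : ℝ => 2*t - 1) 2 t := by
        simpa using ((hasDerivAt_id t).const_mul (2:ℝ)).sub_const 1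
      exact HasDerivAt.scomp t (D2 (2*t - 1)) hin
    have hD := hB.mul hA
    have heq : ((2:ℝ) • (R2 (2*t - 1) * Φ2 (2*t - 1))) * Φ1 (2*t)
        + Φ2 (2*t - 1) * ((2:ℝ) • (R1 (2*t) * Φ1 (2*t)))
        = ((2:ℝ) • R1 (2*t) + (2:ℝ) • R2 (2*t - 1)) * (Φ2 (2*t - 1) * Φ1 (2*t)) := by
      rcases le_total t (1/2) with ht | ht
      · have hz : R2 (2*t - 1) = 0 := z2 _ (Or.inl (by linarith))
        have hi : Φ2 (2*t - 1) = 1 := i2 _ (by linarith)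
        rw [hz, hi]
        simp [smul_mul_assoc, mul_smul_comm, mul_assoc]
      · have hz : R1 (2*t) = 0 := z1 _ (Or.inr (by linarith))
        rw [hz]
        simp [smul_mul_assoc, mul_smul_comm, mul_assoc]
    rw [heq] at hD
    exact hD
  · intro t ht
    beta_reduce
    rw [i1 _ (by linarith), i2 _ (by linarith), one_mul]
  · intro t ht
    beta_reduce
    rw [f1 _ (by linarith), f2 _ (by linarith)]
  · intro t; exact (u2 _).mul (u1 _)

theorem Reach.inverse {𝔗 : Set (Mat d)}
    (hsmul : ∀ (c : ℝ) ⦃a : Mat d⦄, a ∈ 𝔗 → c • a ∈ 𝔗)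
    {K : ℝ} {g : Mat d} (H : Reach 𝔗 K g) : Reach 𝔗 K (Ring.inverse g) := by
  obtain ⟨R, Φ, c1, m1, b1, z1, D1, i1, f1, u1⟩ := H
  have hg : IsUnit g := by
    have := u1 1
    rwa [f1 1 le_rfl] at this
  refine ⟨fun t => (-1:ℝ) • R (1 - t), fun t => Φ (1 - t) * Ring.inverse g,
    ?_, ?_, ?_, ?_, ?_, ?_, ?_, ?_⟩
  · fun_prop
  · intro t; exact hsmul _ (m1 _)
  · intro t; rw [norm_smul]; simpa using b1 (1 - t)
  · intro t ht
    beta_reduce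
    rcases ht with ht | ht
    · rw [z1 (1 - t) (Or.inr (by linarith)), smul_zero]
    · rw [z1 (1 - t) (Or.inl (by linarith)), smul_zero]
  · intro t
    have hout : HasDerivAt (fun s : ℝ => Φ s * Ring.inverse g)
        ((R (1 - t) * Φ (1 - t)) * Ring.inverse g) (1 - t) := (D1 (1 - t)).mul_const _
    have hin : HasDerivAt (fun t : ℝ => 1 - t) (-1) t := by
      simpa using (hasDerivAt_id t).const_sub (1:ℝ)
    have := HasDerivAt.scomp t hout hin
    have heq : (-1:ℝ) • (R (1 - t) * Φ (1 - t) * Ring.inverse g)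
        = ((-1:ℝ) • R (1 - t)) * (Φ (1 - t) * Ring.inverse g) := by
      simp [smul_mul_assoc, mul_assoc]
    rw [heq] at this
    exact this
  · intro t ht
    beta_reduce
    rw [f1 (1 - t) (by linarith), Ring.mul_inverse_cancel _ hg]
  · intro t ht
    beta_reduce
    rw [i1 (1 - t) (by linarith), one_mul]
  · intro t
    have : IsUnit (Ring.inverse g) := by
      rw [← hg.unit_spec, Ring.inverse_unit]
      exact (hg.unit⁻¹).isUnit
    exact (u1 _).mul this


theorem Reach.isUnit {𝔗 : Set (Mat d)} {K : ℝ} {g : Mat d} (H : Reach 𝔗 K g) : IsUnit g := by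
  obtain ⟨R, Φ, -, -, -, -, -, -, f1, u1⟩ := H
  have := u1 1
  rwa [f1 1 le_rfl] at this

theorem Reach.nonneg {𝔗 : Set (Mat d)} {K : ℝ} {g : Mat d} (H : Reach 𝔗 K g) : 0 ≤ K := by
  obtain ⟨R, Φ, -, -, b1, -, -, -, -, -⟩ := H
  exact le_trans (norm_nonneg _) (b1 0)

theorem reach_list {𝔗 : Set (Mat d)} (h𝔗 : IsClosedLieSubalgebra 𝔗) {n : ℝ} (hn : 0 ≤ n)
    {l : List (Mat d)} (h : ∀ M ∈ l, M ∈ 𝔗 ∧ ‖M‖ ≤ n) :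
    Reach 𝔗 (2 ^ l.length * (2 * n)) ((l.map (fun M => NormedSpace.exp M)).prod) := by
  induction l with
  | nil => simpa using reach_one h𝔗.zero_mem (by positivity)
  | cons a l ih =>
    have ha := h a (List.mem_cons_self)
    have hrest := ih (fun M hM => h M (List.mem_cons_of_mem a hM))
    have hmul := Reach.mul h𝔗.add_mem h𝔗.smul_mem hrest (reach_exp h𝔗.smul_mem ha.1)
    rw [List.map_cons, List.prod_cons]
    refine hmul.mono ?_
    have h1 : (1:ℝ) ≤ 2 ^ l.length := one_le_pow₀ (by norm_num)
    have h2 : 2 * ‖a‖ ≤ 2 ^ l.length * (2 * n) := by nlinarith [ha.2, norm_nonneg a]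
    rw [List.length_cons, pow_succ]
    have := max_le (le_refl ((2:ℝ) ^ l.length * (2 * n))) h2
    nlinarith [this]

theorem exists_premap {α β : Type*} (f : α → β) (s : Set α) :
    ∀ l : List β, (∀ y ∈ l, y ∈ f '' s) → ∃ l' : List α, (∀ M ∈ l', M ∈ s) ∧ l'.map f = l := by
  intro l
  induction l with
  | nil => exact fun _ => ⟨[], by simp, by simp⟩
  | cons a l ih =>
    intro h
    obtain ⟨M, hM, hMa⟩ := h a (List.mem_cons_self)
    obtain ⟨l', hl', hmap⟩ := ih (fun y hy => h y (List.mem_cons_of_mem a hy))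
    refine ⟨M :: l', ?_, by simp [hmap, hMa]⟩
    intro N hN
    rcases List.mem_cons.mp hN with h | h
    · exact h ▸ hM
    · exact hl' N h

theorem exists_bound (l : List (Mat d)) : ∃ n : ℝ, 0 ≤ n ∧ ∀ M ∈ l, ‖M‖ ≤ n := by
  induction l with
  | nil => exact ⟨0, le_rfl, by simp⟩
  | cons a l ih =>
    obtain ⟨n, hn, hb⟩ := ih
    refine ⟨max ‖a‖ n, le_trans hn (le_max_right _ _), ?_⟩
    intro M hM
    rcases List.mem_cons.mp hM with h | h
    · exact h ▸ le_max_left _ _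
    · exact le_trans (hb M h) (le_max_right _ _)

theorem reach_expGen {𝔗 : Set (Mat d)} (h𝔗 : IsClosedLieSubalgebra 𝔗) {g : Mat d}
    (hg : g ∈ expGen 𝔗) : ∃ K : ℝ, Reach 𝔗 K g := by
  obtain ⟨l, hl, hprod⟩ := Submonoid.exists_list_of_mem_closure hg
  obtain ⟨l', hl', hmap⟩ := exists_premap _ _ l hl
  obtain ⟨n, hn, hb⟩ := exists_bound l'
  refine ⟨2 ^ l'.length * (2 * n), ?_⟩
  have := reach_list h𝔗 hn (l := l') (fun M hM => ⟨hl' M hM, hb M hM⟩)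
  rwa [hmap, hprod] at this

/-- Reachability between directions. -/
def Rel (𝔗 : Set (Mat d)) (K : ℝ) (u v : Fin d → ℝ) : Prop :=
  ∃ g : Mat d, Reach 𝔗 K g ∧
    (Submodule.span ℝ {u}).map (Matrix.mulVecLin g) = Submodule.span ℝ {v}

theorem Rel.mono {𝔗 : Set (Mat d)} {K K' : ℝ} {u v : Fin d → ℝ} (h : K ≤ K') :
    Rel 𝔗 K u v → Rel 𝔗 K' u v := fun ⟨g, hg, hs⟩ => ⟨g, hg.mono h, hs⟩

theorem Rel.congr {𝔗 : Set (Mat d)} {K : ℝ} {u v u' v' : Fin d → ℝ}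
    (hu : Submodule.span ℝ {u} = Submodule.span ℝ {u'})
    (hv : Submodule.span ℝ {v} = Submodule.span ℝ {v'}) :
    Rel 𝔗 K u v → Rel 𝔗 K u' v' := fun ⟨g, hg, hs⟩ => ⟨g, hg, by rw [← hu, hs, hv]⟩

theorem Rel.symm {𝔗 : Set (Mat d)}
    (hsmul : ∀ (c : ℝ) ⦃a : Mat d⦄, a ∈ 𝔗 → c • a ∈ 𝔗)
    {K : ℝ} {u v : Fin d → ℝ} : Rel 𝔗 K u v → Rel 𝔗 K v u := by
  rintro ⟨g, hg, hs⟩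
  refine ⟨Ring.inverse g, hg.inverse hsmul, ?_⟩
  rw [← hs, ← Submodule.map_comp, ← Matrix.mulVecLin_mul,
    Ring.inverse_mul_cancel _ hg.isUnit, Matrix.mulVecLin_one, Submodule.map_id]

theorem Rel.trans {𝔗 : Set (Mat d)}
    (hadd : ∀ ⦃a b : Mat d⦄, a ∈ 𝔗 → b ∈ 𝔗 → a + b ∈ 𝔗)
    (hsmul : ∀ (c : ℝ) ⦃a : Mat d⦄, a ∈ 𝔗 → c • a ∈ 𝔗)
    {K1 K2 : ℝ} {u v w : Fin d → ℝ} :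
    Rel 𝔗 K1 u v → Rel 𝔗 K2 v w → Rel 𝔗 (2 * max K1 K2) u w := by
  rintro ⟨g1, hg1, hs1⟩ ⟨g2, hg2, hs2⟩
  refine ⟨g2 * g1, Reach.mul hadd hsmul hg1 hg2, ?_⟩
  rw [Matrix.mulVecLin_mul, Submodule.map_comp, hs1, hs2]


noncomputable section

/-- Normalization map. -/
def nu (y : Fin d → ℝ) : Fin d → ℝ := ‖y‖⁻¹ • y

theorem nu_norm {y : Fin d → ℝ} (hy : y ≠ 0) : ‖nu y‖ = 1 := by
  rw [nu, norm_smul, norm_inv, norm_norm, inv_mul_cancel₀ (norm_ne_zero_iff.mpr hy)]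

theorem span_nu {y : Fin d → ℝ} (hy : y ≠ 0) :
    Submodule.span ℝ {nu y} = Submodule.span ℝ {y} :=
  Submodule.span_singleton_smul_eq
    (isUnit_iff_ne_zero.mpr (inv_ne_zero (norm_ne_zero_iff.mpr hy))) y

theorem span_neg_single (y : Fin d → ℝ) :
    Submodule.span ℝ {-y} = Submodule.span ℝ {y} := by
  rw [show -y = (-1:ℝ) • y by simp]
  exact Submodule.span_singleton_smul_eq (isUnit_one.neg) y

theorem map_span_single (g : Mat d) (u : Fin d → ℝ) :
    (Submodule.span ℝ {u}).map (Matrix.mulVecLin g) = Submodule.span ℝ {g.mulVec u} := by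
  rw [Submodule.map_span, Set.image_singleton, Matrix.mulVecLin_apply]

theorem mulVec_ne_zero {g : Mat d} (hg : IsUnit g) {x : Fin d → ℝ} (hx : x ≠ 0) :
    g.mulVec x ≠ 0 := by
  intro h
  apply hx
  have h1 : (↑hg.unit⁻¹ : Mat d) * g = 1 := by
    have h2 := hg.unit.inv_mul
    rwa [hg.unit_spec] at h2
  calc x = (1 : Mat d).mulVec x := (Matrix.one_mulVec x).symm
  _ = (↑hg.unit⁻¹ : Mat d).mulVec (g.mulVec x) := by rw [← h1, ← Matrix.mulVec_mulVec]
  _ = 0 := by rw [h, Matrix.mulVec_zero]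

theorem nu_eq_or {x y : Fin d → ℝ} (hy : y ≠ 0) (hx : ‖x‖ = 1)
    (h : Submodule.span ℝ {y} = Submodule.span ℝ {x}) : nu y = x ∨ nu y = -x := by
  have hyx : y ∈ Submodule.span ℝ ({x} : Set (Fin d → ℝ)) := by
    rw [← h]; exact Submodule.mem_span_singleton_self y
  obtain ⟨c, rfl⟩ := Submodule.mem_span_singleton.mp hyx
  have hc : c ≠ 0 := by rintro rfl; simp at hy
  have hnorm : ‖c • x‖ = |c| := by rw [norm_smul, Real.norm_eq_abs, hx, mul_one]
  rcases hc.lt_or_gt with hlt | hlt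
  · right
    rw [nu, hnorm, abs_of_neg hlt, smul_smul, show (-c)⁻¹ * c = -1 by field_simp]
    simp
  · left
    rw [nu, hnorm, abs_of_pos hlt, smul_smul, inv_mul_cancel₀ hc, one_smul]

/-- Product of exponentials. -/
def Pmap {N : ℕ} (M : Fin N → Mat d) : Mat d :=
  ((List.ofFn M).map (fun A => NormedSpace.exp A)).prod

theorem reach_Pmap {𝔗 : Set (Mat d)} (h𝔗 : IsClosedLieSubalgebra 𝔗) {N n : ℕ}
    {M : Fin N → Mat d} (h : ∀ i, M i ∈ 𝔗 ∧ ‖M i‖ ≤ (n:ℝ)) :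
    Reach 𝔗 (2 ^ N * (2 * (n:ℝ))) (Pmap M) := by
  have key := reach_list h𝔗 (n := (n:ℝ)) (Nat.cast_nonneg n) (l := List.ofFn M) ?_
  · simpa [Pmap, List.length_ofFn] using key
  · intro A hA
    obtain ⟨i, hi⟩ := List.mem_ofFn.mp hA
    exact hi ▸ h i

theorem continuous_Pmap {N : ℕ} : Continuous fun M : Fin N → Mat d => Pmap M := by
  have heq : (fun M : Fin N → Mat d => Pmap M)
      = fun M => ((List.finRange N).map (fun i => NormedSpace.exp (M i))).prod := by
    funext M
    rw [Pmap, List.ofFn_eq_map, List.map_map]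
    rfl
  rw [heq]
  exact continuous_list_prod _ fun i _ =>
    (show Continuous (NormedSpace.exp : Mat d → Mat d) by
      open scoped Matrix.Norms.Operator in exact NormedSpace.exp_continuous).comp (continuous_apply i)

/-- `mulVec` at a fixed vector, as a linear map in the matrix. -/
def mulVecR (e : Fin d → ℝ) : Mat d →ₗ[ℝ] (Fin d → ℝ) where
  toFun g := g.mulVec e
  map_add' a b := Matrix.add_mulVec a b e
  map_smul' c a := by simp [Matrix.smul_mulVec]

theorem continuous_mulVecR (e : Fin d → ℝ) : Continuous fun g : Mat d => g.mulVec e :=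
  (mulVecR e).continuous_of_finiteDimensional

theorem uniform_rel (hd : 2 ≤ d) {𝔗 : Set (Mat d)} (h𝔗 : IsClosedLieSubalgebra 𝔗)
    (hacc : AccessibleAlg 𝔗) :
    ∃ K : ℝ, 0 < K ∧ ∀ u v : Fin d → ℝ, u ≠ 0 → v ≠ 0 → Rel 𝔗 K u v := by
  haveI : Nontrivial (Fin d → ℝ) := by
    refine ⟨0, (fun _ => 1), fun h => ?_⟩
    have := congrFun h ⟨0, by omega⟩
    norm_num at this
  set S := Metric.sphere (0 : Fin d → ℝ) 1 with hSdef
  have hScpt : IsCompact S := isCompact_sphere 0 1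
  haveI : CompactSpace ↥S := isCompact_iff_compactSpace.mp hScpt
  haveI : CompleteSpace ↥S := Metric.isClosed_sphere.completeSpace_coe
  obtain ⟨e, heS⟩ := (NormedSpace.sphere_nonempty (E := Fin d → ℝ) (x := 0) (r := 1)).mpr
    zero_le_one
  haveI : Nonempty ↥S := ⟨⟨e, heS⟩⟩
  have he1 : ‖e‖ = 1 := mem_sphere_zero_iff_norm.mp heS
  have he0 : e ≠ 0 := by intro h; rw [h, norm_zero] at he1; norm_num at he1
  have hmemnorm : ∀ x : ↥S, ‖(x : Fin d → ℝ)‖ = 1 := fun x => mem_sphere_zero_iff_norm.mp x.2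
  have hmem0 : ∀ x : ↥S, (x : Fin d → ℝ) ≠ 0 := by
    intro x h
    have := hmemnorm x
    rw [h, norm_zero] at this; norm_num at this
  -- the compact images
  set C : (N n : ℕ) → Set (Fin N → Mat d) :=
    fun N n => {M | ∀ i, M i ∈ 𝔗 ∧ ‖M i‖ ≤ (n : ℝ)} with hCdef
  set Kimg : (N n : ℕ) → Set (Fin d → ℝ) :=
    fun N n => (fun M : Fin N → Mat d => nu ((Pmap M).mulVec e)) '' C N n with hKimgdef
  have hCunit : ∀ {N n : ℕ}, ∀ M ∈ C N n, IsUnit (Pmap M) :=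
    fun {N n} M hM => (reach_Pmap h𝔗 hM).isUnit
  have hKimgcpt : ∀ N n, IsCompact (Kimg N n) := by
    intro N n
    have hC : IsCompact (C N n) := by
      have hCeq : C N n = Set.pi Set.univ (fun _ : Fin N => 𝔗 ∩ Metric.closedBall 0 (n:ℝ)) := by
        ext M
        simp [hCdef, Set.mem_pi, Metric.mem_closedBall, dist_zero_right]
      rw [hCeq]
      exact isCompact_univ_pi fun i => (isCompact_closedBall 0 _).inter_left h𝔗.closed
    refine hC.image_of_continuousOn ?_
    have hP : Continuous fun M : Fin N → Mat d => (Pmap M).mulVec e :=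
      (continuous_mulVecR e).comp continuous_Pmap
    have hne : ∀ M ∈ C N n, ‖(Pmap M).mulVec e‖ ≠ 0 :=
      fun M hM => norm_ne_zero_iff.mpr (mulVec_ne_zero (hCunit M hM) he0)
    exact ((hP.continuousOn.norm.inv₀ hne).smul hP.continuousOn)
  -- the closed cover of the sphere
  set A : ℕ × ℕ → Set ↥S := fun p =>
    {x | (x : Fin d → ℝ) ∈ Kimg p.1 p.2 ∨ (-(x : Fin d → ℝ)) ∈ Kimg p.1 p.2} with hAdef
  have hAclosed : ∀ p, IsClosed (A p) := by
    intro p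
    have h1 := (hKimgcpt p.1 p.2).isClosed
    exact IsClosed.union (IsClosed.preimage continuous_subtype_val h1)
      (IsClosed.preimage continuous_subtype_val.neg h1)
  have hcover : (⋃ p, A p) = Set.univ := by
    ext x
    simp only [Set.mem_iUnion, Set.mem_univ, iff_true]
    obtain ⟨g, hgE, hgspan⟩ := hacc e x he0 (hmem0 x)
    obtain ⟨l, hl, hprod⟩ := Submonoid.exists_list_of_mem_closure hgE
    obtain ⟨l', hl', hmap⟩ := exists_premap _ _ l hl
    obtain ⟨b, hb0, hb⟩ := exists_bound l'
    refine ⟨(l'.length, ⌈b⌉₊), ?_⟩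
    set M : Fin l'.length → Mat d := l'.get with hMdef
    have hPg : Pmap M = g := by
      rw [Pmap, hMdef, List.ofFn_get, hmap, hprod]
    have hMC : M ∈ C l'.length ⌈b⌉₊ := by
      intro i
      exact ⟨hl' _ (l'.get_mem i), (hb _ (l'.get_mem i)).trans (Nat.le_ceil b)⟩
    have hgu : IsUnit g := hPg ▸ hCunit M hMC
    have hgv : Submodule.span ℝ {g.mulVec e} = Submodule.span ℝ {(x : Fin d → ℝ)} := by
      rw [← map_span_single, hgspan]
    rcases nu_eq_or (mulVec_ne_zero hgu he0) (hmemnorm x) hgv with h | h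
    · exact Or.inl ⟨M, hMC, by beta_reduce; rw [hPg, h]⟩
    · exact Or.inr ⟨M, hMC, by beta_reduce; rw [hPg, h]⟩
  -- Baire category
  obtain ⟨p₀, w, hwO⟩ := nonempty_interior_of_iUnion_of_closed hAclosed hcover
  set O := interior (A p₀) with hOdef
  set c₀ : ℝ := 2 ^ p₀.1 * (2 * (p₀.2 : ℝ)) with hc₀def
  have hArel : ∀ x ∈ A p₀, Rel 𝔗 c₀ e (x : Fin d → ℝ) := by
    intro x hx
    have key : ∀ z : Fin d → ℝ, z ∈ Kimg p₀.1 p₀.2 → Rel 𝔗 c₀ e z := by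
      rintro z ⟨M, hMC, hFM⟩
      refine ⟨Pmap M, reach_Pmap h𝔗 hMC, ?_⟩
      rw [map_span_single, ← hFM, span_nu (mulVec_ne_zero (hCunit M hMC) he0)]
    rcases hx with h | h
    · exact key _ h
    · exact (key _ h).congr rfl (span_neg_single _)
  -- open cover of the sphere with bounded costs
  have hU : ∀ v : ↥S, ∃ U : Set ↥S, IsOpen U ∧ v ∈ U ∧
      ∃ Kv : ℝ, ∀ x ∈ U, Rel 𝔗 Kv e (x : Fin d → ℝ) := by
    intro v
    obtain ⟨h, hhE, hhspan⟩ := hacc w v (hmem0 w) (hmem0 v)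
    obtain ⟨Kh, hKh⟩ := reach_expGen h𝔗 hhE
    have hhu : IsUnit h := hKh.isUnit
    set hi : Mat d := Ring.inverse h with hhidef
    have hiu : IsUnit hi := by
      rw [hhidef, ← hhu.unit_spec, Ring.inverse_unit]
      exact (hhu.unit⁻¹).isUnit
    have hih : hi * h = 1 := Ring.inverse_mul_cancel _ hhu
    have hhi : h * hi = 1 := Ring.mul_inverse_cancel _ hhu
    have hψS : ∀ x : ↥S, nu (hi.mulVec (x : Fin d → ℝ)) ∈ S :=
      fun x => mem_sphere_zero_iff_norm.mpr (nu_norm (mulVec_ne_zero hiu (hmem0 x)))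
    have hψcont : Continuous (fun x : ↥S => nu (hi.mulVec (x : Fin d → ℝ))) := by
      have hmc : Continuous (fun x : ↥S => hi.mulVec (x : Fin d → ℝ)) :=
        (Matrix.mulVecLin hi).continuous_of_finiteDimensional.comp continuous_subtype_val
      unfold nu
      exact (hmc.norm.inv₀ fun x => norm_ne_zero_iff.mpr
        (mulVec_ne_zero hiu (hmem0 x))).smul hmc
    set ψ : ↥S → ↥S := fun x => ⟨nu (hi.mulVec (x : Fin d → ℝ)), hψS x⟩ with hψdef
    have hψc : Continuous ψ := hψcont.subtype_mk _
    have hnSmem : ∀ x : ↥S, -(x : Fin d → ℝ) ∈ S := by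
      intro x
      exact mem_sphere_zero_iff_norm.mpr (by rw [norm_neg]; exact hmemnorm x)
    set nS : ↥S → ↥S := fun x => ⟨-(x : Fin d → ℝ), hnSmem x⟩ with hnSdef
    have hnSc : Continuous nS := continuous_subtype_val.neg.subtype_mk _
    -- the relation `Rel Kh ↑(ψ x) ↑x`
    have hrel : ∀ x : ↥S, Rel 𝔗 Kh (nu (hi.mulVec (x : Fin d → ℝ))) (x : Fin d → ℝ) := by
      intro x
      refine ⟨h, hKh, ?_⟩
      rw [map_span_single]
      have h1 : h.mulVec (nu (hi.mulVec (x : Fin d → ℝ)))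
          = ‖hi.mulVec (x : Fin d → ℝ)‖⁻¹ • ((x : Fin d → ℝ)) := by
        rw [nu, Matrix.mulVec_smul, Matrix.mulVec_mulVec, hhi, Matrix.one_mulVec]
      rw [h1]
      exact Submodule.span_singleton_smul_eq (isUnit_iff_ne_zero.mpr (inv_ne_zero
        (norm_ne_zero_iff.mpr (mulVec_ne_zero hiu (hmem0 x))))) _
    refine ⟨ψ ⁻¹' O ∪ (nS ∘ ψ) ⁻¹' O,
      (isOpen_interior.preimage hψc).union (isOpen_interior.preimage (hnSc.comp hψc)),
      ?_, 2 * max c₀ Kh, ?_⟩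
    · have hspanv : Submodule.span ℝ {hi.mulVec (v : Fin d → ℝ)}
          = Submodule.span ℝ {(w : Fin d → ℝ)} := by
        have hmapeq : (Submodule.span ℝ {(v : Fin d → ℝ)}).map (Matrix.mulVecLin hi)
            = Submodule.span ℝ {(w : Fin d → ℝ)} := by
          rw [← hhspan, ← Submodule.map_comp, ← Matrix.mulVecLin_mul, hih,
            Matrix.mulVecLin_one, Submodule.map_id]
        rw [← map_span_single, hmapeq]
      rcases nu_eq_or (mulVec_ne_zero hiu (hmem0 v)) (hmemnorm w) hspanv with h1 | h1
      · left
        show ψ v ∈ O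
        have hvw : ψ v = w := Subtype.ext h1
        rw [hvw]; exact hwO
      · right
        show nS (ψ v) ∈ O
        have hvw : nS (ψ v) = w := Subtype.ext (by
          show -(nu (hi.mulVec (v : Fin d → ℝ))) = (w : Fin d → ℝ)
          rw [h1, neg_neg])
        rw [hvw]; exact hwO
    · intro x hx
      rcases hx with hx | hx
      · have h1 : Rel 𝔗 c₀ e (nu (hi.mulVec (x : Fin d → ℝ))) :=
          hArel (ψ x) (interior_subset hx)
        exact Rel.trans h𝔗.add_mem h𝔗.smul_mem h1 (hrel x)
      · have h1 : Rel 𝔗 c₀ e (-(nu (hi.mulVec (x : Fin d → ℝ)))) :=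
          hArel (nS (ψ x)) (interior_subset hx)
        have h2 : Rel 𝔗 c₀ e (nu (hi.mulVec (x : Fin d → ℝ))) :=
          h1.congr rfl (span_neg_single _)
        exact Rel.trans h𝔗.add_mem h𝔗.smul_mem h2 (hrel x)
  choose U hUopen hUmem KK hKrel using hU
  obtain ⟨t, ht⟩ := isCompact_univ.elim_finite_subcover U hUopen
    (fun x _ => Set.mem_iUnion.mpr ⟨x, hUmem x⟩)
  set K₁ : ℝ := 1 + ((t.sup fun v => ⌈KK v⌉₊ : ℕ) : ℝ) with hK₁def
  have hK₁pos : 0 < K₁ := by positivity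
  have hK₁ : ∀ x : ↥S, Rel 𝔗 K₁ e (x : Fin d → ℝ) := by
    intro x
    obtain ⟨v, hvt, hxU⟩ := Set.mem_iUnion₂.mp (ht (Set.mem_univ x))
    refine (hKrel v x hxU).mono ?_
    have h1 : KK v ≤ (⌈KK v⌉₊ : ℝ) := Nat.le_ceil _
    have h2 : ((⌈KK v⌉₊ : ℕ) : ℝ) ≤ ((t.sup fun v => ⌈KK v⌉₊ : ℕ) : ℝ) :=
      Nat.cast_le.mpr (Finset.le_sup (f := fun v => ⌈KK v⌉₊) hvt)
    rw [hK₁def]; linarith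
  have hall : ∀ u : Fin d → ℝ, u ≠ 0 → Rel 𝔗 K₁ e u := by
    intro u hu
    have hmem : nu u ∈ S := mem_sphere_zero_iff_norm.mpr (nu_norm hu)
    have hx := hK₁ ⟨nu u, hmem⟩
    exact hx.congr rfl (span_nu hu)
  refine ⟨2 * max K₁ K₁, by rw [max_self]; linarith, fun u v hu hv => ?_⟩
  exact Rel.trans h𝔗.add_mem h𝔗.smul_mem ((hall u hu).symm h𝔗.smul_mem) (hall v hv)

end

end
end Stmt9

/-- If `𝔗` is an accessible closed Lie subalgebra of `gl(d,ℝ)`, `d ≥ 2`,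
then there is `K > 0` such that for all lines `u, v` there is a continuous
`ℜ : [0,1] → 𝔗` with `‖ℜ(t)‖ ≤ K`, whose fundamental solution
`Φ(t) = Id + ∫_0^t ℜ(s)Φ(s) ds` satisfies: `Φ(1)` maps the line `u` onto the line `v`. -/
theorem stmt9 {d : ℕ} (hd : 2 ≤ d) (𝔗 : Set (Mat d)) (h𝔗 : IsClosedLieSubalgebra 𝔗)
    (hacc : AccessibleAlg 𝔗) :
    ∃ K > (0 : ℝ), ∀ u v : Fin d → ℝ, u ≠ 0 → v ≠ 0 →
      ∃ R : ℝ → Mat d, Continuous R ∧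
        (∀ t ∈ Set.Icc (0 : ℝ) 1, R t ∈ 𝔗 ∧ ‖R t‖ ≤ K) ∧
        ∃ Φ : ℝ → Mat d, Continuous Φ ∧
          (∀ t ∈ Set.Icc (0 : ℝ) 1, Φ t = 1 + ∫ s in (0 : ℝ)..t, R s * Φ s) ∧
          (∀ t ∈ Set.Icc (0 : ℝ) 1, IsUnit (Φ t)) ∧
          (Submodule.span ℝ {u}).map (Matrix.mulVecLin (Φ 1)) = Submodule.span ℝ {v} := by
  obtain ⟨K1, hK1pos, hrel⟩ := Stmt9.uniform_rel hd h𝔗 hacc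
  refine ⟨K1, hK1pos, fun u v hu hv => ?_⟩
  obtain ⟨g, ⟨R, Φ, c1, m1, b1, z1, D1, i1, f1, u1⟩, hspan⟩ := hrel u v hu hv
  have hΦc : Continuous Φ := continuous_iff_continuousAt.mpr fun t => (D1 t).continuousAt
  refine ⟨R, c1, fun t _ => ⟨m1 t, b1 t⟩, Φ, hΦc, ?_, fun t _ => u1 t, ?_⟩
  · intro t _
    have hint : IntervalIntegrable (fun s => R s * Φ s) volume 0 t :=
      (c1.mul hΦc).intervalIntegrable 0 t
    have key := intervalIntegral.integral_eq_sub_of_hasDerivAt (fun s _ => D1 s) hint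
    rw [key, i1 0 le_rfl]
    abel
  · rw [f1 1 le_rfl]
    exact hspan
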